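/- In the simplicial set K(H,m), Z_m (the set of m-simplices all of whose faces are trivial) equals all of K(H,m)_m = H^{[m:m]} ≅ H, and two elements a, b ∈ Z_m are homotopic based at the basepoint if and only if a = b. Moreover the compositor-induced composition on homotopy classes is [a]·[b] = [ba], so π_m(K(H,m),*) is isomorphic to the opposite group H^op, hence to H. -/

import Mathlib

/-!
An element of `H^{[n:k]}` is a function on strictly increasing `k`-tuples in `{1,…,n}`. There is
no such tuple for `n < k` and exactly one, `(1,…,m)`, for `n = k = m`; so `Z_m` is all of
`H^{[m:m]} ≅ H`. An `(m+1)`-simplex `y` is the family of its values `y_r` at the tuples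
`{1,…,m+1} ∖ {r}`, and its faces are `∂_0 y = y_1`, `∂_j y = y_{j+1} y_j` for `1 ≤ j ≤ m` and
`∂_{m+1} y = y_{m+1}`. Trivial faces `∂_0, …, ∂_{n-1}` therefore force `y_1 = ⋯ = y_n = 1` and
`∂_n y = y_{n+1}`. For a homotopy this gives `a = y_{m+1} = b`, and for a compositor
`a = C_m`, `b = C_{m+1}`, hence `∂_m C = C_{m+1} C_m = b a`.
-/

/-- `Idx n k` : strictly increasing k-tuples in {1,...,n}, i.e. the set [n:k]. -/
def Idx (n k : ℕ) : Type := {q : Fin k → ℕ // StrictMono q ∧ ∀ i, 1 ≤ q i ∧ q i ≤ n}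

/-- shift entries ≥ j up by one -/
def up (j t : ℕ) : ℕ := if t < j then t else t + 1

/-- shift entries > j up by one -/
def up' (j t : ℕ) : ℕ := if t ≤ j then t else t + 1

lemma up_strictMono (j : ℕ) : StrictMono (up j) := by
  intro a b h; unfold up; split_ifs <;> omega

lemma up'_strictMono (j : ℕ) : StrictMono (up' j) := by
  intro a b h; unfold up'; split_ifs <;> omega

/-- The face maps `∂_j : H^{[n:k]} → H^{[n-1:k]}`. -/
def faceMap {H : Type*} [Monoid H] (n k j : ℕ) (h : Idx n k → H) : Idx (n-1) k → H :=
  fun q =>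
    if ∃ i, q.1 i = j then
      h ⟨up' j ∘ q.1, (up'_strictMono j).comp q.2.1, fun i => by
        have h1 := (q.2.2 i).1; have h2 := (q.2.2 i).2
        simp only [Function.comp_apply]; unfold up'; split_ifs <;> omega⟩ *
      h ⟨up j ∘ q.1, (up_strictMono j).comp q.2.1, fun i => by
        have h1 := (q.2.2 i).1; have h2 := (q.2.2 i).2
        simp only [Function.comp_apply]; unfold up; split_ifs <;> omega⟩
    else
      h ⟨up j ∘ q.1, (up_strictMono j).comp q.2.1, fun i => by
        have h1 := (q.2.2 i).1; have h2 := (q.2.2 i).2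
        simp only [Function.comp_apply]; unfold up; split_ifs <;> omega⟩

open Finset

namespace Idx

lemma isEmpty_of_lt {n k : ℕ} (h : n < k) : IsEmpty (Idx n k) := by
  refine ⟨fun q => absurd h (not_lt.2 ?_)⟩
  have hcard := card_le_card_of_injOn q.1 (s := univ) (t := Icc 1 n)
    (fun i _ => mem_Icc.2 (q.2.2 i)) q.2.1.injective.injOn
  simpa using hcard

def full (m : ℕ) : Idx m m :=
  ⟨fun i => i + 1, fun _ _ h => Nat.succ_lt_succ h, fun i => ⟨Nat.le_add_left 1 _, i.isLt⟩⟩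

lemma eq_full {m : ℕ} (q : Idx m m) : q = full m := by
  have hcard : (Icc 1 m).card = m := by simp
  have hq := orderEmbOfFin_unique hcard (fun i => mem_Icc.2 (q.2.2 i)) q.2.1
  have hfull := orderEmbOfFin_unique hcard (fun i => mem_Icc.2 ((full m).2.2 i)) (full m).2.1
  exact Subtype.ext (hq.trans hfull.symm)

instance (m : ℕ) : Unique (Idx m m) where
  default := full m
  uniq := eq_full

/-- The tuple `{1,…,m+1} ∖ {r}`, for `1 ≤ r ≤ m + 1`. -/
def skip (m r : ℕ) : Idx (m + 1) m :=
  ⟨up r ∘ (full m).1, (up_strictMono r).comp (full m).2.1, fun i => by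
    have := i.isLt
    simp only [full, Function.comp_apply, up]
    split_ifs <;> omega⟩

lemma skip_injOn (m : ℕ) : Set.InjOn (skip m) (Set.Icc 1 (m + 1)) := by
  suffices ∀ r s, 1 ≤ r → r < s → s ≤ m + 1 → skip m r ≠ skip m s by
    intro r ⟨hr, _⟩ s ⟨_, hs⟩ hrs
    by_contra hne
    rcases Nat.lt_or_gt_of_ne hne with hlt | hlt
    exacts [this r s hr hlt hs hrs, this s r (by omega) hlt (by omega) hrs.symm]
  intro r s hr hrs hs h
  have := congrFun (congrArg Subtype.val h) ⟨r - 1, by omega⟩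
  simp only [skip, full, Function.comp_apply, up] at this
  split_ifs at this <;> omega

end Idx

open Idx

section

variable {H : Type*} [Monoid H]

lemma faceMap_apply_of_exists {n k j : ℕ} (y : Idx n k → H) (q : Idx (n - 1) k)
    (hj : ∃ i, q.1 i = j) {p p' : Idx n k} (hp : p.1 = up' j ∘ q.1) (hp' : p'.1 = up j ∘ q.1) :
    faceMap n k j y q = y p * y p' := by
  rw [faceMap, if_pos hj]
  exact congrArg₂ (· * ·) (congrArg y (Subtype.ext hp.symm)) (congrArg y (Subtype.ext hp'.symm))

lemma faceMap_apply_of_not_exists {n k j : ℕ} (y : Idx n k → H) (q : Idx (n - 1) k)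
    (hj : ¬∃ i, q.1 i = j) {p : Idx n k} (hp : p.1 = up j ∘ q.1) :
    faceMap n k j y q = y p := by
  rw [faceMap, if_neg hj]
  exact congrArg y (Subtype.ext hp.symm)

variable {m : ℕ}

lemma faceMap_zero_eq (y : Idx (m + 1) m → H) :
    faceMap (m + 1) m 0 y = fun _ => y (skip m 1) := by
  funext q
  rw [eq_full q]
  refine faceMap_apply_of_not_exists y _ (fun ⟨i, hi⟩ => by simp [full] at hi) ?_
  funext i
  simp [skip, full, up]

lemma faceMap_eq_of_pos (y : Idx (m + 1) m → H) {j : ℕ} (hj : 1 ≤ j) (hjm : j ≤ m) :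
    faceMap (m + 1) m j y = fun _ => y (skip m (j + 1)) * y (skip m j) := by
  funext q
  rw [eq_full q]
  refine faceMap_apply_of_exists y _ ⟨⟨j - 1, by omega⟩, by simp [full]; omega⟩ ?_ rfl
  funext i
  simp only [skip, full, Function.comp_apply, up, up']
  split_ifs <;> omega

lemma faceMap_last_eq (y : Idx (m + 1) m → H) :
    faceMap (m + 1) m (m + 1) y = fun _ => y (skip m (m + 1)) := by
  funext q
  rw [eq_full q]
  exact faceMap_apply_of_not_exists y _ (fun ⟨i, hi⟩ => by simp [full] at hi; omega) rfl

lemma faceMap_eq_of_lower_faces_eq_one {y : Idx (m + 1) m → H} {n : ℕ} (hn : n ≤ m)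
    (hy : ∀ i, i < n → faceMap (m + 1) m i y = fun _ => 1) :
    faceMap (m + 1) m n y = fun _ => y (skip m (n + 1)) := by
  induction n with
  | zero => exact faceMap_zero_eq y
  | succ n ih =>
    have hskip : y (skip m (n + 1)) = 1 := by
      have := (ih (by omega) fun i hi => hy i (by omega)).symm.trans (hy n (by omega))
      exact congrFun this (default : Idx m m)
    rw [faceMap_eq_of_pos y (by omega) hn, hskip, mul_one]

lemma lower_faces_eq_one_of_apply_skip_eq_one {y : Idx (m + 1) m → H} {n : ℕ} (hn : n ≤ m)
    (hy : ∀ r, 1 ≤ r → r ≤ n → y (skip m r) = 1) :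
    ∀ i, i < n → faceMap (m + 1) m i y = fun _ => 1 := by
  intro i hi
  rcases Nat.eq_zero_or_pos i with rfl | hi0
  · rw [faceMap_zero_eq, hy 1 le_rfl hi]
  · rw [faceMap_eq_of_pos y hi0 (by omega), hy (i + 1) (by omega) hi, hy i hi0 hi.le, mul_one]

lemma exists_apply_skip_eq_one_and_apply_skip_last_eq (x : H) :
    ∃ y : Idx (m + 1) m → H,
      (∀ r, 1 ≤ r → r ≤ m → y (skip m r) = 1) ∧ y (skip m (m + 1)) = x := by
  classical
  refine ⟨Pi.mulSingle (skip m (m + 1)) x, fun r hr hrm => ?_, Pi.mulSingle_eq_same _ _⟩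
  refine Pi.mulSingle_eq_of_ne (fun h => ?_) _
  have := skip_injOn m ⟨hr, by omega⟩ ⟨by omega, le_rfl⟩ h
  omega

end

/-- in `K(H,m)`: (i) every element of `K(H,m)_m = H^{[m:m]} ≅ H` has all
faces trivial, i.e. `Z_m` is all of `H^{[m:m]}`; (ii) two elements `a, b ∈ Z_m` are
homotopic based at the basepoint iff `a = b`; (iii) for any compositor `C` of `(a,b)`
(a filler of the (m,m)-horn with faces `1,…,1,a,—,b`), one has `δ_m C = b·a`; hence
`π_m(K(H,m),*) ≅ H^op ≅ H` with `[a]·[b] = [ba]`. -/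
theorem KHm_pi_m {H : Type*} [Group H] (m : ℕ) (hm : 0 < m) :
    -- (i) Z_m = K(H,m)_m
    (∀ (a : Idx m m → H) (j : ℕ), j ≤ m → faceMap m m j a = fun _ => (1 : H)) ∧
    -- (ii) based homotopy on Z_m is equality
    (∀ a b : Idx m m → H,
      (∃ y : Idx (m+1) m → H,
        (∀ i, i < m → faceMap (m+1) m i y = fun _ => (1 : H)) ∧
        faceMap (m+1) m m y = a ∧ faceMap (m+1) m (m+1) y = b) ↔ a = b) ∧
    -- (iii) the compositor composition is [a]·[b] = [ba]
    (∀ (a b : Idx m m → H) (C : Idx (m+1) m → H),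
      (∀ i, i + 2 ≤ m → faceMap (m+1) m i C = fun _ => (1 : H)) →
      faceMap (m+1) m (m-1) C = a →
      faceMap (m+1) m (m+1) C = b →
      faceMap (m+1) m m C = fun q => b q * a q) := by
  refine ⟨fun a j _ => funext fun q => (isEmpty_of_lt (by omega : m - 1 < m)).elim q, ?_, ?_⟩
  · intro a b
    constructor
    · rintro ⟨y, hy, rfl, rfl⟩
      rw [faceMap_eq_of_lower_faces_eq_one le_rfl hy, faceMap_last_eq]
    · rintro rfl
      obtain ⟨y, hy, hy_last⟩ :=
        exists_apply_skip_eq_one_and_apply_skip_last_eq (m := m) (a default)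
      have ha : (fun _ => y (skip m (m + 1))) = a := by
        rw [hy_last, eq_const_of_unique a]; rfl
      refine ⟨y, lower_faces_eq_one_of_apply_skip_eq_one le_rfl hy, ?_,
        (faceMap_last_eq y).trans ha⟩
      rw [faceMap_eq_of_pos y hm le_rfl, hy m hm le_rfl, ← ha]
      exact funext fun _ => mul_one _
  · rintro a b C hC rfl rfl
    rw [faceMap_eq_of_pos C hm le_rfl, faceMap_last_eq,
      faceMap_eq_of_lower_faces_eq_one (n := m - 1) (by omega) (fun i hi => hC i (by omega)),
      Nat.sub_add_cancel hm]
    rfl
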